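/- Assume (A). Then for every (a,s) ∈ 𝔊° with a − b − 𝟏 ≠ 0: the linear function φ_a attains its maximum value m_{a,s} = max_{x∈P_{a,s}} φ_a(x) on the polyhedron P_{a,s} (in particular the supremum of φ_a over P_{a,s} is finite and attained); the set M_{a,s} = {x ∈ P_{a,s} : φ_a(x) = m_{a,s}} is bounded; and the affine dimension d_{a,s} of M_{a,s} satisfies 0 ≤ d_{a,s} ≤ N−1. -/

import Mathlib

open MeasureTheory
open scoped ENNReal Classical

/-!
Assumption (A) forces the recession cone of `P_{a,s}` to meet the half-space `{φ_a ≥ 0}` only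
in `0`: along a ray `y₀ + t v` in that intersection, the boxes `∏ᵢ (r^(yᵢ+1), r^yᵢ]` at the points
`y` with `y_j - y₀_j ∈ ℕ` are disjoint subsets of `(0,1]^N`, and on each of them the integrand of
`I(r)` has mass at least `(1-r)^N r^(Σ b - φ_a(y₀) - s) / #𝔊`. Hence the superlevel sets of `φ_a`
on the closed polyhedron `P_{a,s}` are compact, which yields the maximum and the boundedness of
`M_{a,s}`; and `M_{a,s}` lies in a level set of the nonzero functional `φ_a`, a hyperplane.
-/

/-- `I(r) = ∫_{(0,1]^N} x^b / (Σ_{(a,s)∈𝔊} x^a r^s) dx`, with values in `[0,∞]`. -/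
noncomputable def Ifun (N : ℕ) (G : Finset ((Fin N → ℕ) × ℝ)) (b : Fin N → ℕ)
    (r : ℝ) : ℝ≥0∞ :=
  ∫⁻ x in Set.univ.pi (fun _ : Fin N => Set.Ioc (0 : ℝ) 1),
    ENNReal.ofReal ((∏ i, x i ^ b i) / ∑ p ∈ G, (∏ i, x i ^ p.1 i) * r ^ p.2)

/-- The polyhedron `P_{a,s} = {y ∈ [0,∞)^N : ⟨a − a′, y⟩ ≤ s′ − s for all (a′,s′) ∈ 𝔊}`. -/
def Pset (N : ℕ) (G : Finset ((Fin N → ℕ) × ℝ)) (a : Fin N → ℕ) (s : ℝ) :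
    Set (Fin N → ℝ) :=
  {y | (∀ i, 0 ≤ y i) ∧ ∀ p ∈ G, ∑ i, ((a i : ℝ) - (p.1 i : ℝ)) * y i ≤ p.2 - s}

/-- The linear function `φ_a(y) = ⟨a − b − 𝟏, y⟩`. -/
def phiFun (N : ℕ) (a b : Fin N → ℕ) (y : Fin N → ℝ) : ℝ :=
  ∑ i, ((a i : ℝ) - (b i : ℝ) - 1) * y i

/-- `𝔊° = {(a,s) ∈ 𝔊 : P_{a,s} has positive N-dimensional Lebesgue measure}`. -/
noncomputable def Gcirc (N : ℕ) (G : Finset ((Fin N → ℕ) × ℝ)) :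
    Finset ((Fin N → ℕ) × ℝ) :=
  G.filter (fun p => 0 < volume (Pset N G p.1 p.2))

theorem rpow_sum_mul_eq_prod_pow {ι : Type*} {r : ℝ} (hr : 0 < r) (s : Finset ι) (u : ι → ℝ)
    (e : ι → ℕ) : r ^ (∑ i ∈ s, u i * e i) = ∏ i ∈ s, (r ^ u i) ^ e i := by
  rw [Real.rpow_sum_of_pos hr]
  exact Finset.prod_congr rfl fun i _ => by rw [Real.rpow_mul hr.le, Real.rpow_natCast]

section LogBox

variable {ι : Type*} {r : ℝ}

/-- The image of the unit cube `y + [0, 1)^ι` under `t ↦ r ^ t` in each coordinate. -/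
def logBox (r : ℝ) (y : ι → ℝ) : Set (ι → ℝ) :=
  Set.univ.pi fun i => Set.Ioc (r ^ (y i + 1)) (r ^ y i)

theorem measurableSet_logBox [Countable ι] (y : ι → ℝ) : MeasurableSet (logBox r y) :=
  MeasurableSet.univ_pi fun _ => measurableSet_Ioc

theorem volume_logBox [Fintype ι] (hr0 : 0 < r) (hr1 : r ≤ 1) (y : ι → ℝ) :
    volume (logBox r y) = ENNReal.ofReal ((1 - r) ^ Fintype.card ι * r ^ ∑ i, y i) := by
  have hIoc (i : ι) : volume (Set.Ioc (r ^ (y i + 1)) (r ^ y i))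
      = ENNReal.ofReal ((1 - r) * r ^ y i) := by
    rw [Real.volume_Ioc, Real.rpow_add_one hr0.ne']
    ring_nf
  rw [logBox, volume_pi_pi, Finset.prod_congr rfl fun i _ => hIoc i,
    ← ENNReal.ofReal_prod_of_nonneg fun i _ => by have := sub_nonneg.2 hr1; positivity,
    Finset.prod_mul_distrib, Finset.prod_const, Finset.card_univ, Real.rpow_sum_of_pos hr0]

theorem logBox_subset_pi_Ioc (hr0 : 0 < r) (hr1 : r ≤ 1) {y : ι → ℝ} (hy : 0 ≤ y) :
    logBox r y ⊆ Set.univ.pi fun _ => Set.Ioc (0 : ℝ) 1 := fun _ hx i _ =>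
  ⟨(Real.rpow_pos_of_pos hr0 _).trans (hx i trivial).1,
    (hx i trivial).2.trans (Real.rpow_le_one hr0.le hr1 (hy i))⟩

theorem disjoint_logBox (hr0 : 0 < r) (hr1 : r < 1) {y y' : ι → ℝ} (j : ι)
    (hj : y j + 1 ≤ y' j) : Disjoint (logBox r y) (logBox r y') :=
  Set.disjoint_left.2 fun _ hx hx' =>
    ((hx j trivial).1.trans_le ((hx' j trivial).2.trans
      (Real.rpow_le_rpow_of_exponent_ge hr0 hr1.le hj))).false

theorem rpow_le_prod_pow_of_mem_logBox [Fintype ι] (hr0 : 0 < r) {y x : ι → ℝ} (hx : x ∈ logBox r y)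
    (e : ι → ℕ) : r ^ (∑ i, (y i + 1) * e i) ≤ ∏ i, x i ^ e i := by
  rw [rpow_sum_mul_eq_prod_pow hr0]
  exact Finset.prod_le_prod (fun i _ => by positivity) fun i _ =>
    pow_le_pow_left₀ (by positivity) (hx i trivial).1.le _

theorem prod_pow_le_rpow_of_mem_logBox [Fintype ι] (hr0 : 0 < r) {y x : ι → ℝ} (hx : x ∈ logBox r y)
    (e : ι → ℕ) : ∏ i, x i ^ e i ≤ r ^ (∑ i, y i * e i) := by
  have hx0 (i : ι) : 0 ≤ x i := ((Real.rpow_pos_of_pos hr0 _).trans (hx i trivial).1).le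
  rw [rpow_sum_mul_eq_prod_pow hr0]
  exact Finset.prod_le_prod (fun i _ => pow_nonneg (hx0 i) _) fun i _ =>
    pow_le_pow_left₀ (hx0 i) (hx i trivial).2 _

end LogBox

theorem MeasureTheory.setLIntegral_eq_top_of_pairwise_disjoint {α : Type*} [MeasurableSpace α]
    {μ : Measure α} {f : α → ℝ≥0∞} {S : Set α} {B : ℕ → Set α}
    (hB : ∀ k, MeasurableSet (B k)) (hdisj : Pairwise (Function.onFun Disjoint B))
    (hBS : ∀ k, B k ⊆ S)
    {c : ℝ≥0∞} (hc : c ≠ 0) (hcB : ∀ k, c ≤ ∫⁻ x in B k, f x ∂μ) :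
    ∫⁻ x in S, f x ∂μ = ⊤ := by
  refine top_le_iff.1 ?_
  calc ⊤ = ∑' _ : ℕ, c := (ENNReal.tsum_const_eq_top_of_ne_zero hc).symm
    _ ≤ ∑' k, ∫⁻ x in B k, f x ∂μ := ENNReal.tsum_le_tsum hcB
    _ = ∫⁻ x in ⋃ k, B k, f x ∂μ := (lintegral_iUnion hB hdisj f).symm
    _ ≤ ∫⁻ x in S, f x ∂μ := lintegral_mono_set (Set.iUnion_subset hBS)

section Polyhedron

variable {E ι : Type*} [NormedAddCommGroup E] [NormedSpace ℝ E] [FiniteDimensional ℝ E]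

theorem isClosed_setOf_forall_le (ℓ : ι → E →ₗ[ℝ] ℝ) (c : ι → ℝ) :
    IsClosed {y | ∀ i, ℓ i y ≤ c i} := by
  simp only [Set.ofPred_forall]
  exact isClosed_iInter fun i =>
    isClosed_le (ℓ i).continuous_of_finiteDimensional continuous_const

theorem isBounded_setOf_forall_le [Fintype ι] (ℓ : ι → E →ₗ[ℝ] ℝ) (c : ι → ℝ)
    (hrec : ∀ v, (∀ i, ℓ i v ≤ 0) → v = 0) : Bornology.IsBounded {y | ∀ i, ℓ i y ≤ c i} := by
  rcases isEmpty_or_nonempty ι with hι | hι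
  · exact isBounded_iff_forall_norm_le.2 ⟨0, fun y _ => by simp [hrec y isEmptyElim]⟩
  set F : E → ℝ := fun w => Finset.univ.sup' Finset.univ_nonempty fun i => ℓ i w
  have hF : Continuous F := Continuous.finset_sup'_apply _ fun i _ =>
    (ℓ i).continuous_of_finiteDimensional
  -- `F` is positively homogeneous and positive on the unit sphere, hence `F y ≥ ε ‖y‖`.
  have hF_smul (t : ℝ) (ht : 0 ≤ t) (w : E) : F (t • w) = t * F w := by
    simp only [F, map_smul, smul_eq_mul]
    exact (Finset.apply_sup'_eq_sup'_comp _ (t * ·) fun x y => mul_max_of_nonneg x y ht).symm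
  obtain ⟨ε, hε, hεF⟩ := (isCompact_sphere (0 : E) 1).exists_forall_le' hF.continuousOn
    (a := 0) fun u hu => by
      by_contra! hFu
      have hu0 : u = 0 := hrec u fun i =>
        (Finset.le_sup' (fun i => ℓ i u) (Finset.mem_univ i)).trans hFu
      simp [hu0] at hu
  have hF_ge (y : E) : ε * ‖y‖ ≤ F y := by
    rcases eq_or_ne y 0 with rfl | hy
    · simp [F]
    have hny : 0 < ‖y‖ := norm_pos_iff.2 hy
    have hu : ‖y‖⁻¹ • y ∈ Metric.sphere (0 : E) 1 := by
      simp [norm_smul, hny.ne']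
    calc ε * ‖y‖ ≤ F (‖y‖⁻¹ • y) * ‖y‖ := mul_le_mul_of_nonneg_right (hεF _ hu) hny.le
      _ = F y := by rw [hF_smul _ (inv_nonneg.2 hny.le)]; field_simp
  refine isBounded_iff_forall_norm_le.2
    ⟨Finset.univ.sup' Finset.univ_nonempty c / ε, fun y hy => ?_⟩
  rw [le_div_iff₀ hε, mul_comm]
  exact (hF_ge y).trans (Finset.sup'_mono_fun fun i _ => hy i)

end Polyhedron

theorem finrank_direction_affineSpan_le_of_subset_fiber {V : Type*} [AddCommGroup V]
    [Module ℝ V] [FiniteDimensional ℝ V] {f : V →ₗ[ℝ] ℝ} (hf : f ≠ 0) {S : Set V} {m : ℝ}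
    (hS : S ⊆ f ⁻¹' {m}) :
    Module.finrank ℝ (affineSpan ℝ S).direction ≤ Module.finrank ℝ V - 1 := by
  have hspan : vectorSpan ℝ S ≤ LinearMap.ker f := by
    rw [vectorSpan_def, Submodule.span_le]
    rintro _ ⟨x, hx, w, hw, rfl⟩
    have hfx : f x = m := hS hx
    have hfw : f w = m := hS hw
    simp [hfx, hfw]
  rw [direction_affineSpan, ← Module.Dual.finrank_ker_add_one_of_ne_zero hf, Nat.add_sub_cancel]
  exact Submodule.finrank_mono hspan

noncomputable def integrandI (N : ℕ) (G : Finset ((Fin N → ℕ) × ℝ)) (b : Fin N → ℕ) (r : ℝ)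
    (x : Fin N → ℝ) : ℝ :=
  (∏ i, x i ^ b i) / ∑ p ∈ G, (∏ i, x i ^ p.1 i) * r ^ p.2

/-- The recession cone of `P_{a,s}`; it does not depend on `s`. -/
def recessionCone (N : ℕ) (G : Finset ((Fin N → ℕ) × ℝ)) (a : Fin N → ℕ) :
    Set (Fin N → ℝ) :=
  {v | 0 ≤ v ∧ ∀ q ∈ G, (fun i => (a i : ℝ) - q.1 i) ⬝ᵥ v ≤ 0}

section Pset

variable {N : ℕ} {G : Finset ((Fin N → ℕ) × ℝ)} {a b : Fin N → ℕ} {s r : ℝ} {y v : Fin N → ℝ}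

def phiLin (a b : Fin N → ℕ) : (Fin N → ℝ) →ₗ[ℝ] ℝ :=
  dotProductBilin ℝ ℝ fun i => (a i : ℝ) - b i - 1

theorem phiLin_apply : phiLin a b y = phiFun N a b y := rfl

theorem phiFun_add_smul (t : ℝ) :
    phiFun N a b (y + t • v) = phiFun N a b y + t * phiFun N a b v := by
  simp only [← phiLin_apply, map_add, map_smul, smul_eq_mul]

theorem phiLin_ne_zero {j : Fin N} (hj : a j ≠ b j + 1) : phiLin a b ≠ 0 := by
  intro h
  have := LinearMap.congr_fun h (Pi.single j 1)
  simp only [phiLin, dotProductBilin_apply_apply, dotProduct_single, mul_one,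
    LinearMap.zero_apply] at this
  exact hj (by exact_mod_cast (by linarith : (a j : ℝ) = b j + 1))

theorem mem_Pset_iff :
    y ∈ Pset N G a s ↔ 0 ≤ y ∧ ∀ q ∈ G, (fun i => (a i : ℝ) - q.1 i) ⬝ᵥ y ≤ q.2 - s :=
  Iff.rfl

theorem add_smul_mem_Pset (hy : y ∈ Pset N G a s) (hv : v ∈ recessionCone N G a) {t : ℝ}
    (ht : 0 ≤ t) : y + t • v ∈ Pset N G a s := by
  rw [mem_Pset_iff] at hy ⊢
  refine ⟨add_nonneg hy.1 (smul_nonneg ht hv.1), fun q hq => ?_⟩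
  rw [dotProduct_add, dotProduct_smul, smul_eq_mul]
  linarith [hy.2 q hq, mul_nonpos_of_nonneg_of_nonpos ht (hv.2 q hq)]

theorem sum_mul_add_le_of_mem_Pset (hy : y ∈ Pset N G a s) {q : (Fin N → ℕ) × ℝ}
    (hq : q ∈ G) : ∑ i, y i * a i + s ≤ ∑ i, y i * q.1 i + q.2 := by
  have hsum : ∑ i, ((a i : ℝ) - q.1 i) * y i = ∑ i, y i * a i - ∑ i, y i * q.1 i := by
    rw [← Finset.sum_sub_distrib]
    exact Finset.sum_congr rfl fun i _ => by ring
  linarith [hy.2 q hq]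

theorem rpow_div_card_le_integrandI (hr0 : 0 < r) (hr1 : r < 1) (haG : (a, s) ∈ G)
    (hy : y ∈ Pset N G a s) {x : Fin N → ℝ} (hx : x ∈ logBox r y) :
    r ^ (∑ i, (y i + 1) * b i - (∑ i, y i * a i + s)) / G.card ≤ integrandI N G b r x := by
  have hx0 (i : Fin N) : 0 < x i := (Real.rpow_pos_of_pos hr0 _).trans (hx i trivial).1
  have hterm (q) (hq : q ∈ G) : (∏ i, x i ^ q.1 i) * r ^ q.2 ≤ r ^ (∑ i, y i * a i + s) :=
    calc (∏ i, x i ^ q.1 i) * r ^ q.2 ≤ r ^ (∑ i, y i * q.1 i) * r ^ q.2 :=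
          mul_le_mul_of_nonneg_right (prod_pow_le_rpow_of_mem_logBox hr0 hx _) (by positivity)
      _ = r ^ (∑ i, y i * q.1 i + q.2) := (Real.rpow_add hr0 _ _).symm
      _ ≤ r ^ (∑ i, y i * a i + s) :=
          Real.rpow_le_rpow_of_exponent_ge hr0 hr1.le (sum_mul_add_le_of_mem_Pset hy hq)
  have hden : 0 < ∑ q ∈ G, (∏ i, x i ^ q.1 i) * r ^ q.2 :=
    Finset.sum_pos' (fun q _ => mul_nonneg (Finset.prod_nonneg fun i _ => by
      have := hx0 i; positivity) (by positivity))
      ⟨_, haG, mul_pos (Finset.prod_pos fun i _ => pow_pos (hx0 i) _) (by positivity)⟩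
  rw [Real.rpow_sub hr0, div_div, integrandI]
  refine div_le_div₀ (Finset.prod_nonneg fun i _ => pow_nonneg (hx0 i).le _)
    (rpow_le_prod_pow_of_mem_logBox hr0 hx b) hden ?_
  calc ∑ q ∈ G, (∏ i, x i ^ q.1 i) * r ^ q.2 ≤ ∑ _q ∈ G, r ^ (∑ i, y i * a i + s) :=
        Finset.sum_le_sum hterm
    _ = r ^ (∑ i, y i * a i + s) * G.card := by rw [Finset.sum_const, nsmul_eq_mul, mul_comm]

theorem ofReal_le_setLIntegral_logBox (hr0 : 0 < r) (hr1 : r < 1) (haG : (a, s) ∈ G)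
    (hy : y ∈ Pset N G a s) :
    ENNReal.ofReal ((1 - r) ^ N / G.card * r ^ (∑ i, (b i : ℝ) - phiFun N a b y - s)) ≤
      ∫⁻ x in logBox r y, ENNReal.ofReal (integrandI N G b r x) := by
  have hexp : ∑ i, (b i : ℝ) - phiFun N a b y - s
      = ∑ i, y i + (∑ i, (y i + 1) * b i - (∑ i, y i * a i + s)) := by
    have hsum : ∑ i, (b i : ℝ) - phiFun N a b y
        = ∑ i, y i + ∑ i, (y i + 1) * b i - ∑ i, y i * a i := by
      simp only [phiFun, ← Finset.sum_sub_distrib, ← Finset.sum_add_distrib]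
      exact Finset.sum_congr rfl fun i _ => by ring
    linarith
  calc ENNReal.ofReal ((1 - r) ^ N / G.card * r ^ (∑ i, (b i : ℝ) - phiFun N a b y - s))
      = ∫⁻ _ in logBox r y,
          ENNReal.ofReal (r ^ (∑ i, (y i + 1) * b i - (∑ i, y i * a i + s)) / G.card) := by
        rw [setLIntegral_const, volume_logBox hr0 hr1.le, Fintype.card_fin,
          ← ENNReal.ofReal_mul (by positivity), hexp, Real.rpow_add hr0]
        ring_nf
    _ ≤ ∫⁻ x in logBox r y, ENNReal.ofReal (integrandI N G b r x) :=
        setLIntegral_mono' (measurableSet_logBox y) fun _ hx =>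
          ENNReal.ofReal_le_ofReal (rpow_div_card_le_integrandI hr0 hr1 haG hy hx)

theorem eq_zero_of_mem_recessionCone (hr0 : 0 < r) (hr1 : r < 1) (hI : Ifun N G b r ≠ ⊤)
    (haG : (a, s) ∈ G) {y₀ : Fin N → ℝ} (hy₀ : y₀ ∈ Pset N G a s)
    (hv : v ∈ recessionCone N G a) (hvφ : 0 ≤ phiFun N a b v) : v = 0 := by
  by_contra hv0
  obtain ⟨j, hj⟩ : ∃ j, 0 < v j := by
    by_contra! h
    exact hv0 (funext fun i => le_antisymm (h i) (hv.1 i))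
  set y : ℕ → Fin N → ℝ := fun k => y₀ + ((k : ℝ) / v j) • v
  have hyP (k : ℕ) : y k ∈ Pset N G a s := add_smul_mem_Pset hy₀ hv (by positivity)
  have hyj (k : ℕ) : y k j = y₀ j + k := by
    simp only [y, Pi.add_apply, Pi.smul_apply, smul_eq_mul]
    field_simp
  have hφ (k : ℕ) : phiFun N a b y₀ ≤ phiFun N a b (y k) := by
    rw [phiFun_add_smul]
    have : 0 ≤ (k : ℝ) / v j := by positivity
    nlinarith
  have hκ : 0 < (1 - r) ^ N / G.card * r ^ (∑ i, (b i : ℝ) - phiFun N a b y₀ - s) := by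
    have : (0 : ℝ) < G.card := by exact_mod_cast Finset.card_pos.2 ⟨_, haG⟩
    have : 0 < 1 - r := sub_pos.2 hr1
    positivity
  refine hI (setLIntegral_eq_top_of_pairwise_disjoint (fun k => measurableSet_logBox (y k))
    ((pairwise_disjoint_on _).2 fun k k' hk => disjoint_logBox hr0 hr1 j ?_)
    (fun k => logBox_subset_pi_Ioc hr0 hr1.le (hyP k).1) (ENNReal.ofReal_pos.2 hκ).ne'
    fun k => (ENNReal.ofReal_le_ofReal ?_).trans
      (ofReal_le_setLIntegral_logBox hr0 hr1 haG (hyP k)))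
  · rw [hyj, hyj]
    have : (k : ℝ) + 1 ≤ k' := by exact_mod_cast hk
    linarith
  · exact mul_le_mul_of_nonneg_left
      (Real.rpow_le_rpow_of_exponent_ge hr0 hr1.le (by linarith [hφ k]))
      (div_nonneg (pow_nonneg (sub_nonneg.2 hr1.le) _) (Nat.cast_nonneg _))

end Pset

section Superlevel

variable {N : ℕ} {G : Finset ((Fin N → ℕ) × ℝ)} {a b : Fin N → ℕ} {s : ℝ}

def superlevelConstraint (G : Finset ((Fin N → ℕ) × ℝ)) (a b : Fin N → ℕ) :
    Fin N ⊕ G ⊕ Unit → (Fin N → ℝ) →ₗ[ℝ] ℝ :=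
  Sum.elim (fun i => -LinearMap.proj i) <|
    Sum.elim (fun q => dotProductBilin ℝ ℝ fun i => (a i : ℝ) - q.1.1 i) fun _ => -phiLin a b

def superlevelBound (G : Finset ((Fin N → ℕ) × ℝ)) (s c : ℝ) : Fin N ⊕ G ⊕ Unit → ℝ :=
  Sum.elim 0 <| Sum.elim (fun q => q.1.2 - s) fun _ => -c

theorem Pset_inter_superlevel_eq (c : ℝ) :
    {y ∈ Pset N G a s | c ≤ phiFun N a b y} =
      {y | ∀ i, superlevelConstraint G a b i y ≤ superlevelBound G s c i} := by
  ext y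
  simp [superlevelConstraint, superlevelBound, Sum.forall, mem_Pset_iff, Pi.le_def, phiLin_apply,
    and_assoc]

theorem isBounded_Pset_inter_superlevel
    (hrec : ∀ v ∈ recessionCone N G a, 0 ≤ phiFun N a b v → v = 0) (c : ℝ) :
    Bornology.IsBounded {y ∈ Pset N G a s | c ≤ phiFun N a b y} := by
  rw [Pset_inter_superlevel_eq]
  refine isBounded_setOf_forall_le _ _ fun v hv => hrec v ⟨fun i => ?_, fun q hq => ?_⟩ ?_
  · simpa [superlevelConstraint] using hv (.inl i)
  · simpa [superlevelConstraint] using hv (.inr (.inl ⟨q, hq⟩))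
  · simpa [superlevelConstraint, phiLin_apply] using hv (.inr (.inr ()))

theorem exists_isGreatest_image_phiFun
    (hrec : ∀ v ∈ recessionCone N G a, 0 ≤ phiFun N a b v → v = 0)
    (hP : (Pset N G a s).Nonempty) : ∃ m, IsGreatest (phiFun N a b '' Pset N G a s) m := by
  obtain ⟨y₀, hy₀⟩ := hP
  have hS : IsCompact {y ∈ Pset N G a s | phiFun N a b y₀ ≤ phiFun N a b y} := by
    refine Metric.isCompact_of_isClosed_isBounded ?_ (isBounded_Pset_inter_superlevel hrec _)
    rw [Pset_inter_superlevel_eq]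
    exact isClosed_setOf_forall_le _ _
  obtain ⟨z, hz, hzmax⟩ := hS.exists_isMaxOn ⟨y₀, hy₀, le_rfl⟩
    (phiLin a b).continuous_of_finiteDimensional.continuousOn
  refine ⟨phiFun N a b z, ⟨z, hz.1, rfl⟩, ?_⟩
  rintro _ ⟨y, hy, rfl⟩
  rcases le_total (phiFun N a b y₀) (phiFun N a b y) with h | h
  · exact hzmax ⟨hy, h⟩
  · exact h.trans (hzmax ⟨hy₀, le_rfl⟩)

end Superlevel

theorem stmt6_general (N : ℕ) (G : Finset ((Fin N → ℕ) × ℝ)) (b : Fin N → ℕ)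
    (hA : ∀ r : ℝ, 0 < r → r < 1 → Ifun N G b r < ⊤) :
    ∀ p ∈ Gcirc N G, (∃ i, p.1 i ≠ b i + 1) →
      ∃ m : ℝ, IsGreatest (phiFun N p.1 b '' Pset N G p.1 p.2) m ∧
        Bornology.IsBounded {x ∈ Pset N G p.1 p.2 | phiFun N p.1 b x = m} ∧
        Module.finrank ℝ
          (affineSpan ℝ {x ∈ Pset N G p.1 p.2 | phiFun N p.1 b x = m}).direction ≤ N - 1 := by
  rintro ⟨a, s⟩ hp ⟨j, hj⟩
  obtain ⟨haG, hvol⟩ := Finset.mem_filter.1 hp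
  obtain ⟨y₀, hy₀⟩ := nonempty_of_measure_ne_zero hvol.ne'
  have hrec : ∀ v ∈ recessionCone N G a, 0 ≤ phiFun N a b v → v = 0 := fun v hv =>
    eq_zero_of_mem_recessionCone one_half_pos one_half_lt_one
      (hA _ one_half_pos one_half_lt_one).ne haG hy₀ hv
  obtain ⟨m, hm⟩ := exists_isGreatest_image_phiFun hrec ⟨y₀, hy₀⟩
  refine ⟨m, hm, (isBounded_Pset_inter_superlevel hrec m).subset fun x hx => ⟨hx.1, hx.2.ge⟩, ?_⟩
  simpa using finrank_direction_affineSpan_le_of_subset_fiber (phiLin_ne_zero hj)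
    (m := m) fun x hx => hx.2

/-- Under assumption (A), for every `(a,s) ∈ 𝔊°` with `a − b − 𝟏 ≠ 0`,
the linear function `φ_a` attains a maximum `m` on `P_{a,s}`, the set
`M_{a,s} = {x ∈ P_{a,s} : φ_a(x) = m}` is bounded, and its affine dimension
(the dimension of the direction of its affine span) is at most `N − 1`. -/
theorem stmt6 (N : ℕ) (hN : 1 ≤ N) (G : Finset ((Fin N → ℕ) × ℝ)) (hGne : G.Nonempty)
    (hGs : ∀ p ∈ G, 0 ≤ p.2) (b : Fin N → ℕ)
    (hA : ∀ r : ℝ, 0 < r → r < 1 → Ifun N G b r < ⊤) :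
    ∀ p ∈ Gcirc N G, (∃ i, p.1 i ≠ b i + 1) →
      ∃ m : ℝ, IsGreatest (phiFun N p.1 b '' Pset N G p.1 p.2) m ∧
        Bornology.IsBounded {x ∈ Pset N G p.1 p.2 | phiFun N p.1 b x = m} ∧
        Module.finrank ℝ
          (affineSpan ℝ {x ∈ Pset N G p.1 p.2 | phiFun N p.1 b x = m}).direction ≤ N - 1 :=
  stmt6_general N G b hA
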